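/- The first-order quantum channel scheme is a trace-preserving, positivity-preserving linear map: let H be Hermitian and L_1,…,L_m be d×d complex matrices, Q = Σⱼ LⱼᴴLⱼ, Δt > 0. Then (i) I + i(Δt/2)H is invertible and U = (I − i(Δt/2)H)(I + i(Δt/2)H)^{−1} is unitary; (ii) with M₀ = U(I − (Δt/2)Q) and Mⱼ = √Δt·Lⱼ for 1 ≤ j ≤ m, one has Σ_{j=0}^{m} MⱼᴴMⱼ = I + (Δt²/4)Q² =: S, which is positive definite; (iii) setting M̃ⱼ = Mⱼ·S^{−1/2} (S^{−1/2} the inverse of the positive definite square root of S), one has Σ_{j=0}^{m} M̃ⱼᴴM̃ⱼ = I, and consequently the map ρ ↦ Σ_{j=0}^{m} M̃ⱼ ρ M̃ⱼᴴ preserves the trace and maps positive semidefinite matrices to positive semidefinite matrices. -/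

import Mathlib

/-!
The Cayley transform `U = (1 - A)(1 + A)⁻¹` of the skew-Hermitian matrix `A = i(Δt/2)H` is
unitary, because `(1 + A)ᴴ = 1 - A` commutes with `1 + A` and `(1 + A)ᴴ(1 + A) = 1 + AᴴA` is
positive definite. Unitarity of `U` removes it from `M₀ᴴM₀`, so with `Q = Σ LⱼᴴLⱼ` Hermitian the
Kraus sum collapses to `(1 - (Δt/2)Q)² + ΔtQ = 1 + (Δt²/4)Q² = S`. Since `S = R²` for the
Hermitian invertible square root `R`, conjugating by `R⁻¹` normalizes the sum to `1`, and
trace preservation follows by cyclicity of the trace.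
-/

open Matrix
open scoped ComplexOrder

/-- The positive semidefinite square root of a matrix (defined to be `0` if the matrix is not
positive semidefinite). -/
noncomputable def matSqrt {d : ℕ} (A : Matrix (Fin d) (Fin d) ℂ) : Matrix (Fin d) (Fin d) ℂ :=
  open scoped Classical in
  if h : A.PosSemidef then h.1.eigenvectorUnitary.1 * diagonal ((↑) ∘ (h.1.eigenvalues · |>.sqrt))
    * (star h.1.eigenvectorUnitary : Matrix (Fin d) (Fin d) ℂ) else 0

namespace Matrix

variable {n : Type*}

lemma IsHermitian.conjTranspose_I_mul_ofReal_smul {H : Matrix n n ℂ} (hH : H.IsHermitian)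
    (t : ℝ) : ((Complex.I * t) • H)ᴴ = -((Complex.I * t) • H) := by
  rw [conjTranspose_smul, hH.eq, ← neg_smul]
  simp

variable [Fintype n]

lemma PosSemidef.sum_mul_mul_conjTranspose {ι : Type*} [Fintype ι] {ρ : Matrix n n ℂ}
    (hρ : ρ.PosSemidef) (K : ι → Matrix n n ℂ) : (∑ j, K j * ρ * (K j)ᴴ).PosSemidef :=
  posSemidef_sum _ fun j _ => hρ.mul_mul_conjTranspose_same (K j)

variable [DecidableEq n]

lemma trace_sum_mul_mul_conjTranspose {ι R : Type*} [Fintype ι] [CommSemiring R] [StarRing R]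
    {K : ι → Matrix n n R} (hK : ∑ j, (K j)ᴴ * K j = 1) (ρ : Matrix n n R) :
    trace (∑ j, K j * ρ * (K j)ᴴ) = trace ρ := by
  simp only [trace_sum, trace_mul_cycle (K _)]
  rw [← trace_sum, ← Finset.sum_mul, hK, one_mul]

lemma isUnit_one_add_of_conjTranspose_eq_neg {A : Matrix n n ℂ} (hA : Aᴴ = -A) :
    IsUnit (1 + A) := by
  have hgram : (1 + A)ᴴ * (1 + A) = 1 + Aᴴ * A := by
    rw [conjTranspose_add, conjTranspose_one, hA]
    noncomm_ring
  have hpos : ((1 + A)ᴴ * (1 + A)).PosDef := by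
    rw [hgram]
    exact PosDef.one.add_posSemidef (posSemidef_conjTranspose_mul_self A)
  exact isUnit_of_mul_isUnit_right hpos.isUnit

lemma one_sub_mul_one_add_inv_mem_unitaryGroup {A : Matrix n n ℂ} (hA : Aᴴ = -A) :
    (1 - A) * (1 + A)⁻¹ ∈ unitaryGroup n ℂ := by
  have hplus := isUnit_one_add_of_conjTranspose_eq_neg hA
  have hadj : (1 + A)ᴴ = 1 - A := by
    rw [conjTranspose_add, conjTranspose_one, hA, sub_eq_add_neg]
  have hminus : IsUnit (1 - A) := hadj ▸ (isUnit_conjTranspose _).2 hplus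
  have hcomm : (1 + A) * (1 - A) = (1 - A) * (1 + A) := by noncomm_ring
  rw [mem_unitaryGroup_iff', star_eq_conjTranspose, conjTranspose_mul, conjTranspose_nonsing_inv,
    hadj, ← hadj, conjTranspose_conjTranspose, hadj]
  calc (1 - A)⁻¹ * (1 + A) * ((1 - A) * (1 + A)⁻¹)
      = (1 - A)⁻¹ * ((1 + A) * (1 - A)) * (1 + A)⁻¹ := by noncomm_ring
    _ = ((1 - A)⁻¹ * (1 - A)) * ((1 + A) * (1 + A)⁻¹) := by rw [hcomm]; noncomm_ring
    _ = 1 := by rw [nonsing_inv_mul _ ((isUnit_iff_isUnit_det _).1 hminus),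
          mul_nonsing_inv _ ((isUnit_iff_isUnit_det _).1 hplus), one_mul]

lemma conjTranspose_mul_self_unitary_mul {U : Matrix n n ℂ} (hU : U ∈ unitaryGroup n ℂ)
    (B : Matrix n n ℂ) : (U * B)ᴴ * (U * B) = Bᴴ * B := by
  rw [conjTranspose_mul, Matrix.mul_assoc, ← Matrix.mul_assoc Uᴴ, ← star_eq_conjTranspose U,
    Unitary.star_mul_self_of_mem hU, Matrix.one_mul]

lemma sum_conjTranspose_mul_self_sqrt_smul {ι : Type*} [Fintype ι] (L : ι → Matrix n n ℂ)
    {s : ℝ} (hs : 0 ≤ s) :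
    ∑ j, (((√s : ℝ) : ℂ) • L j)ᴴ * (((√s : ℝ) : ℂ) • L j) = (s : ℂ) • ∑ j, (L j)ᴴ * L j := by
  rw [Finset.smul_sum]
  refine Finset.sum_congr rfl fun j _ => ?_
  rw [conjTranspose_smul, smul_mul_smul_comm, Complex.star_def, Complex.conj_ofReal,
    ← Complex.ofReal_mul, Real.mul_self_sqrt hs]

lemma conjTranspose_mul_self_add_sum_sqrt_smul {ι : Type*} [Fintype ι] {U : Matrix n n ℂ}
    (hU : U ∈ unitaryGroup n ℂ) (L : ι → Matrix n n ℂ) {Δt : ℝ} (hΔt : 0 ≤ Δt) :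
    (U * (1 - ((Δt / 2 : ℝ) : ℂ) • ∑ j, (L j)ᴴ * L j))ᴴ
        * (U * (1 - ((Δt / 2 : ℝ) : ℂ) • ∑ j, (L j)ᴴ * L j))
      + ∑ j, (((√Δt : ℝ) : ℂ) • L j)ᴴ * (((√Δt : ℝ) : ℂ) • L j)
      = 1 + ((Δt ^ 2 / 4 : ℝ) : ℂ) • (∑ j, (L j)ᴴ * L j) ^ 2 := by
  set Q := ∑ j, (L j)ᴴ * L j
  have hQ : Qᴴ = Q := (posSemidef_sum _ fun j _ => posSemidef_conjTranspose_mul_self (L j)).1.eq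
  rw [conjTranspose_mul_self_unitary_mul hU, sum_conjTranspose_mul_self_sqrt_smul L hΔt,
    conjTranspose_sub, conjTranspose_one, conjTranspose_smul, hQ, Complex.star_def,
    Complex.conj_ofReal, sq Q]
  simp only [mul_sub, sub_mul, mul_one, one_mul, smul_mul_smul_comm]
  match_scalars <;> ring

lemma posDef_one_add_smul_sq {Q : Matrix n n ℂ} (hQ : Q.IsHermitian) {c : ℝ} (hc : 0 ≤ c) :
    (1 + (c : ℂ) • Q ^ 2).PosDef := by
  have hQ2 : (Q ^ 2).PosSemidef := by
    rw [sq]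
    nth_rewrite 1 [← hQ.eq]
    exact posSemidef_conjTranspose_mul_self Q
  exact PosDef.one.add_posSemidef (hQ2.smul (by exact_mod_cast hc))

lemma sum_conjTranspose_mul_self_mul_inv {ι R : Type*} [Fintype ι] [CommRing R] [StarRing R]
    {K : ι → Matrix n n R} {S : Matrix n n R} (hS : S.IsHermitian) (hSu : IsUnit S)
    (hK : ∑ j, (K j)ᴴ * K j = S * S) :
    ∑ j, (K j * S⁻¹)ᴴ * (K j * S⁻¹) = 1 := by
  have hdet := (isUnit_iff_isUnit_det S).1 hSu
  simp only [conjTranspose_mul, conjTranspose_nonsing_inv, hS.eq]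
  calc ∑ j, S⁻¹ * (K j)ᴴ * (K j * S⁻¹) = S⁻¹ * (∑ j, (K j)ᴴ * K j) * S⁻¹ := by
        rw [Finset.mul_sum, Finset.sum_mul]
        exact Finset.sum_congr rfl fun j _ => by noncomm_ring
    _ = (S⁻¹ * S) * (S * S⁻¹) := by rw [hK]; noncomm_ring
    _ = 1 := by rw [nonsing_inv_mul S hdet, mul_nonsing_inv S hdet, one_mul]

end Matrix

section matSqrt

variable {d : ℕ} {A : Matrix (Fin d) (Fin d) ℂ}

lemma matSqrt_eq_conjStarAlgAut (hA : A.PosSemidef) :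
    matSqrt A = Unitary.conjStarAlgAut ℂ _ hA.1.eigenvectorUnitary
      (diagonal (RCLike.ofReal ∘ Real.sqrt ∘ hA.1.eigenvalues)) := by
  rw [matSqrt, dif_pos hA, Unitary.conjStarAlgAut_apply]
  rfl

lemma matSqrt_mul_self (hA : A.PosSemidef) : matSqrt A * matSqrt A = A := by
  conv_rhs => rw [hA.1.spectral_theorem]
  rw [matSqrt_eq_conjStarAlgAut hA, ← map_mul, diagonal_mul_diagonal]
  congr 2
  funext i
  simp [← Complex.ofReal_mul, Real.mul_self_sqrt (hA.eigenvalues_nonneg i)]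

lemma isHermitian_matSqrt (hA : A.PosSemidef) : (matSqrt A).IsHermitian := by
  rw [IsHermitian, ← star_eq_conjTranspose, matSqrt_eq_conjStarAlgAut hA, ← map_star,
    star_eq_conjTranspose, diagonal_conjTranspose]
  congr 2
  funext i
  simp

lemma isUnit_matSqrt (hA : A.PosDef) : IsUnit (matSqrt A) :=
  isUnit_of_mul_isUnit_right (matSqrt_mul_self hA.posSemidef ▸ hA.isUnit)

end matSqrt

theorem stmt11_general {d m : ℕ}
    (H : Matrix (Fin d) (Fin d) ℂ) (hH : H.IsHermitian)
    (L : Fin m → Matrix (Fin d) (Fin d) ℂ) (Δt : ℝ) (hΔt : 0 < Δt)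
    (Q : Matrix (Fin d) (Fin d) ℂ) (hQ : Q = ∑ j, (L j)ᴴ * L j)
    (U : Matrix (Fin d) (Fin d) ℂ)
    (hU : U = (1 - (Complex.I * ((Δt / 2 : ℝ) : ℂ)) • H) *
        (1 + (Complex.I * ((Δt / 2 : ℝ) : ℂ)) • H)⁻¹)
    (K : Fin (m+1) → Matrix (Fin d) (Fin d) ℂ)
    (hK : K = Fin.cons (U * (1 - ((Δt / 2 : ℝ) : ℂ) • Q))
        (fun j => ((Real.sqrt Δt : ℝ) : ℂ) • L j))
    (S : Matrix (Fin d) (Fin d) ℂ) (hS : S = 1 + ((Δt ^ 2 / 4 : ℝ) : ℂ) • Q ^ 2)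
    (Kt : Fin (m+1) → Matrix (Fin d) (Fin d) ℂ)
    (hKt : Kt = fun j => K j * (matSqrt S)⁻¹) :
    IsUnit (1 + (Complex.I * ((Δt / 2 : ℝ) : ℂ)) • H)
    ∧ U ∈ Matrix.unitaryGroup (Fin d) ℂ
    ∧ (∑ j, (K j)ᴴ * K j = S)
    ∧ S.PosDef
    ∧ (∑ j, (Kt j)ᴴ * Kt j = 1)
    ∧ (∀ ρ : Matrix (Fin d) (Fin d) ℂ,
        Matrix.trace (∑ j, Kt j * ρ * (Kt j)ᴴ) = Matrix.trace ρ)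
    ∧ (∀ ρ : Matrix (Fin d) (Fin d) ℂ, ρ.PosSemidef →
        (∑ j, Kt j * ρ * (Kt j)ᴴ).PosSemidef) := by
  have hskew := hH.conjTranspose_I_mul_ofReal_smul (Δt / 2)
  have hUmem : U ∈ unitaryGroup (Fin d) ℂ := hU ▸ one_sub_mul_one_add_inv_mem_unitaryGroup hskew
  have hQpsd : Q.PosSemidef :=
    hQ ▸ posSemidef_sum _ fun j _ => posSemidef_conjTranspose_mul_self (L j)
  have hKsum : ∑ j, (K j)ᴴ * K j = S := by
    rw [hK, Fin.sum_univ_succ, hS, hQ]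
    exact conjTranspose_mul_self_add_sum_sqrt_smul hUmem L hΔt.le
  have hSpos : S.PosDef := hS ▸ posDef_one_add_smul_sq hQpsd.isHermitian (by positivity)
  have hKtsum : ∑ j, (Kt j)ᴴ * Kt j = 1 := by
    rw [hKt]
    exact sum_conjTranspose_mul_self_mul_inv (isHermitian_matSqrt hSpos.posSemidef)
      (isUnit_matSqrt hSpos) (by rw [hKsum, matSqrt_mul_self hSpos.posSemidef])
  exact ⟨isUnit_one_add_of_conjTranspose_eq_neg hskew, hUmem, hKsum, hSpos, hKtsum,
    trace_sum_mul_mul_conjTranspose hKtsum, fun ρ hρ => hρ.sum_mul_mul_conjTranspose Kt⟩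

/-- The first-order quantum channel scheme is a trace-preserving, positivity-preserving linear
map: (i) `I + i(Δt/2)H` is invertible and the Cayley transform `U` is unitary; (ii) with
`M₀ = U(I − (Δt/2)Q)` and `Mⱼ = √Δt Lⱼ`, `Σⱼ MⱼᴴMⱼ = I + (Δt²/4)Q² = S`, which is positive
definite; (iii) `M̃ⱼ = Mⱼ S^{−1/2}` satisfy `Σⱼ M̃ⱼᴴM̃ⱼ = I`, and `ρ ↦ Σⱼ M̃ⱼ ρ M̃ⱼᴴ`
preserves trace and positive semidefiniteness. -/
theorem stmt11 {d m : ℕ} (hd : 1 ≤ d)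
    (H : Matrix (Fin d) (Fin d) ℂ) (hH : H.IsHermitian)
    (L : Fin m → Matrix (Fin d) (Fin d) ℂ) (Δt : ℝ) (hΔt : 0 < Δt)
    (Q : Matrix (Fin d) (Fin d) ℂ) (hQ : Q = ∑ j, (L j)ᴴ * L j)
    (U : Matrix (Fin d) (Fin d) ℂ)
    (hU : U = (1 - (Complex.I * ((Δt / 2 : ℝ) : ℂ)) • H) *
        (1 + (Complex.I * ((Δt / 2 : ℝ) : ℂ)) • H)⁻¹)
    (K : Fin (m+1) → Matrix (Fin d) (Fin d) ℂ)
    (hK : K = Fin.cons (U * (1 - ((Δt / 2 : ℝ) : ℂ) • Q))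
        (fun j => ((Real.sqrt Δt : ℝ) : ℂ) • L j))
    (S : Matrix (Fin d) (Fin d) ℂ) (hS : S = 1 + ((Δt ^ 2 / 4 : ℝ) : ℂ) • Q ^ 2)
    (Kt : Fin (m+1) → Matrix (Fin d) (Fin d) ℂ)
    (hKt : Kt = fun j => K j * (matSqrt S)⁻¹) :
    IsUnit (1 + (Complex.I * ((Δt / 2 : ℝ) : ℂ)) • H)
    ∧ U ∈ Matrix.unitaryGroup (Fin d) ℂ
    ∧ (∑ j, (K j)ᴴ * K j = S)
    ∧ S.PosDef
    ∧ (∑ j, (Kt j)ᴴ * Kt j = 1)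
    ∧ (∀ ρ : Matrix (Fin d) (Fin d) ℂ,
        Matrix.trace (∑ j, Kt j * ρ * (Kt j)ᴴ) = Matrix.trace ρ)
    ∧ (∀ ρ : Matrix (Fin d) (Fin d) ℂ, ρ.PosSemidef →
        (∑ j, Kt j * ρ * (Kt j)ᴴ).PosSemidef) :=
  stmt11_general H hH L Δt hΔt Q hQ U hU K hK S hS Kt hKt
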